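/- arXiv:1510.08517 — 6 statements merged into one kernel-verified Lean document; each statement's English description precedes it below -/
import Mathlib

section
/- Let {X_n} be a ranking supermartingale with parameters K < 0, ε > 0 (i.e., X_n ≥ K a.s. and E(X_{n+1}|F_n) ≤ X_n − ε·1_{X_n ≥ 0}). Then the series ∑_{k=1}^∞ P(X_k ≥ 0) converges and its sum is at most (E(X_1) − K)/ε. -/
open MeasureTheory

/-! Taking expectations in the supermartingale condition gives
`E X_{n+1} ≤ E X_n - ε P(X_n ≥ 0)`; telescoping, `ε ∑_{k<N} P(X_{k+1} ≥ 0) ≤ E X_1 - E X_{N+1}`,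
and `E X_{N+1} ≥ K` bounds the partial sums uniformly. -/

theorem integral_le_integral_sub_of_condExp_le {Ω : Type*} {m m₀ : MeasurableSpace Ω}
    {μ : Measure Ω} [IsFiniteMeasure μ] (hm : m ≤ m₀) {Y Z : Ω → ℝ} {s : Set Ω} (ε : ℝ)
    (hZ : Integrable Z μ) (hs : NullMeasurableSet s μ)
    (h : ∀ᵐ ω ∂μ, (μ[Y | m]) ω ≤ Z ω - s.indicator (fun _ => ε) ω) :
    ∫ ω, Y ω ∂μ ≤ ∫ ω, Z ω ∂μ - ε * μ.real s := by
  have hind : Integrable (s.indicator fun _ => ε) μ := (integrable_const ε).indicator₀ hs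
  have hint_ind : ∫ ω, s.indicator (fun _ => ε) ω ∂μ = ε * μ.real s := by
    rw [integral_indicator₀ hs, setIntegral_const, smul_eq_mul, mul_comm]
  calc ∫ ω, Y ω ∂μ = ∫ ω, (μ[Y | m]) ω ∂μ := (integral_condExp hm).symm
    _ ≤ ∫ ω, (Z ω - s.indicator (fun _ => ε) ω) ∂μ :=
      integral_mono_ae integrable_condExp (hZ.sub hind) h
    _ = ∫ ω, Z ω ∂μ - ε * μ.real s := by rw [integral_sub hZ hind, hint_ind]

theorem summable_and_tsum_le_of_le_sub_mul {a p : ℕ → ℝ} {K ε : ℝ} (hε : 0 < ε)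
    (hp : ∀ n, 0 ≤ p n) (hdec : ∀ n, a (n + 1) ≤ a n - ε * p n) (hbd : ∀ n, K ≤ a n) :
    Summable p ∧ ∑' n, p n ≤ (a 0 - K) / ε := by
  have hpartial : ∀ N, ∑ n ∈ Finset.range N, p n ≤ (a 0 - K) / ε := by
    intro N
    rw [le_div_iff₀ hε, Finset.sum_mul]
    calc ∑ n ∈ Finset.range N, p n * ε ≤ ∑ n ∈ Finset.range N, (a n - a (n + 1)) :=
          Finset.sum_le_sum fun n _ => by linarith [hdec n]
      _ = a 0 - a N := Finset.sum_range_sub' a N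
      _ ≤ a 0 - K := by linarith [hbd N]
  have hsum : Summable p := summable_of_sum_range_le hp hpartial
  exact ⟨hsum, hsum.tsum_le_of_sum_range_le hpartial⟩

theorem stmt2_general
    {Ω : Type*} {mΩ : MeasurableSpace Ω} {μ : Measure Ω} [IsProbabilityMeasure μ]
    (𝒢 : Filtration ℕ mΩ) (X : ℕ → Ω → ℝ)
    (K ε : ℝ) (hε : 0 < ε)
    (hint : ∀ n, Integrable (X n) μ)
    (hbd : ∀ n, 1 ≤ n → ∀ᵐ ω ∂μ, K ≤ X n ω)
    (hdec : ∀ n, 1 ≤ n → ∀ᵐ ω ∂μ,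
      (μ[X (n + 1) | 𝒢 n]) ω ≤ X n ω - Set.indicator {ω' | 0 ≤ X n ω'} (fun _ => ε) ω) :
    Summable (fun k : ℕ => (μ {ω | 0 ≤ X (k + 1) ω}).toReal) ∧
      ∑' k : ℕ, (μ {ω | 0 ≤ X (k + 1) ω}).toReal ≤ (∫ ω, X 1 ω ∂μ - K) / ε := by
  refine summable_and_tsum_le_of_le_sub_mul (a := fun n => ∫ ω, X (n + 1) ω ∂μ) hε
    (fun _ => ENNReal.toReal_nonneg) (fun n => ?_) (fun n => ?_)
  · exact integral_le_integral_sub_of_condExp_le (𝒢.le (n + 1)) ε (hint (n + 1))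
      (nullMeasurableSet_le aemeasurable_const (hint (n + 1)).aemeasurable)
      (hdec (n + 1) n.succ_pos)
  · simpa using integral_mono_ae (integrable_const K) (hint (n + 1)) (hbd (n + 1) n.succ_pos)

/-- For a ranking supermartingale, ∑_{k=1}^∞ P(X_k ≥ 0) converges and is at most
(E(X₁) − K)/ε. -/
theorem stmt2
    {Ω : Type*} {mΩ : MeasurableSpace Ω} {μ : Measure Ω} [IsProbabilityMeasure μ]
    (𝒢 : Filtration ℕ mΩ) (X : ℕ → Ω → ℝ)
    (hadapt : Adapted 𝒢 X)
    (K ε : ℝ) (hK : K < 0) (hε : 0 < ε)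
    (hint : ∀ n, Integrable (X n) μ)
    (hbd : ∀ n, 1 ≤ n → ∀ᵐ ω ∂μ, K ≤ X n ω)
    (hdec : ∀ n, 1 ≤ n → ∀ᵐ ω ∂μ,
      (μ[X (n + 1) | 𝒢 n]) ω ≤ X n ω - Set.indicator {ω' | 0 ≤ X n ω'} (fun _ => ε) ω) :
    Summable (fun k : ℕ => (μ {ω | 0 ≤ X (k + 1) ω}).toReal) ∧
      ∑' k : ℕ, (μ {ω | 0 ≤ X (k + 1) ω}).toReal ≤ (∫ ω, X 1 ω ∂μ - K) / ε :=
  stmt2_general 𝒢 X K ε hε hint hbd hdec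
end

section
/- (Farkas' Lemma, inclusion form) Let A ∈ ℝ^{m×n}, b ∈ ℝ^m, c ∈ ℝ^n, d ∈ ℝ. Assume {x | A x ≤ b} is nonempty. Then {x | A x ≤ b} ⊆ {x | cᵀx ≤ d} if and only if there exists y ∈ ℝ^m with y ≥ 0, Aᵀ y = c, and bᵀ y ≤ d. -/
/-!
Homogenizing with a slack variable turns the certificate into a solution `z ≥ 0` of `M z = (c, d)`
for the matrix `M = [Aᵀ 0; bᵀ 1]`. By Farkas' lemma this is solvable iff every `(x, s)` with
`A x + s b ≥ 0` and `s ≥ 0` satisfies `cᵀx + s d ≥ 0`. For `s > 0` this is the inclusion applied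
to `-x / s`; for `s = 0` it says that `-x` is a recession direction of the polyhedron, along which
`cᵀ` cannot increase since it is bounded by `d` there. Farkas' lemma itself is the separation of
`b` from the cone `A (ℝⁿ₊)`. That cone is closed by conic Carathéodory: moving along a kernel
vector until a coordinate vanishes shows it is the finite union of the cones over linearly
independent sets of columns, each the image of a closed orthant under an injective linear map.
-/

open Matrix Finset

section SupportedOn

variable {R ι : Type*} [Semiring R]

variable (R) in
def supportedOn (s : Finset ι) : Submodule R (ι → R) :=
  Submodule.pi (↑s)ᶜ fun _ => ⊥

lemma mem_supportedOn {s : Finset ι} {y : ι → R} : y ∈ supportedOn R s ↔ ∀ i ∉ s, y i = 0 := by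
  simp [supportedOn, Submodule.mem_pi]

lemma supportedOn_mono {s t : Finset ι} (h : s ⊆ t) : supportedOn R s ≤ supportedOn R t :=
  fun _ hy => mem_supportedOn.mpr fun i hi => mem_supportedOn.mp hy i fun his => hi (h his)

@[simp]
lemma supportedOn_univ [Fintype ι] : supportedOn R (univ : Finset ι) = ⊤ := by
  ext; simp [mem_supportedOn]

end SupportedOn

section ConicCaratheodory

variable {𝕜 ι : Type*} [Field 𝕜] [LinearOrder 𝕜] [IsStrictOrderedRing 𝕜]

lemma exists_nonneg_sub_smul_apply_eq_zero [Fintype ι] {y μ : ι → 𝕜} (hy : 0 ≤ y)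
    (hμ : ∃ i, 0 < μ i) : ∃ t : 𝕜, ∃ i, 0 < μ i ∧ 0 ≤ y - t • μ ∧ (y - t • μ) i = 0 := by
  obtain ⟨i, hi, hmin⟩ := (univ.filter fun i => 0 < μ i).exists_min_image (fun i => y i / μ i)
    (by simpa [Finset.Nonempty] using hμ)
  simp only [mem_filter, mem_univ, true_and] at hi hmin
  refine ⟨y i / μ i, i, hi, fun j => ?_, by simp [div_mul_cancel₀ _ hi.ne']⟩
  simp only [Pi.zero_apply, Pi.sub_apply, Pi.smul_apply, smul_eq_mul, sub_nonneg]
  rcases le_or_gt (μ j) 0 with hj | hj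
  · exact (mul_nonpos_of_nonneg_of_nonpos (div_nonneg (hy i) hi.le) hj).trans (hy j)
  · exact (le_div_iff₀ hj).mp (hmin j hj)

variable {E : Type*} [AddCommGroup E] [Module 𝕜 E]

lemma image_supportedOn_nonneg_eq_iUnion [Fintype ι] [DecidableEq ι] (L : (ι → 𝕜) →ₗ[𝕜] E)
    {s : Finset ι} {μ : ι → 𝕜} (hμs : μ ∈ supportedOn 𝕜 s) (hμ : μ ≠ 0) (hLμ : L μ = 0) :
    L '' (supportedOn 𝕜 s ∩ Set.Ici 0) =
      ⋃ i ∈ s, L '' (supportedOn 𝕜 (s.erase i) ∩ Set.Ici 0) := by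
  refine subset_antisymm ?_ (Set.iUnion₂_subset fun i _ =>
    Set.image_mono (Set.inter_subset_inter_left _ (supportedOn_mono (s.erase_subset i))))
  obtain ⟨ν, hνs, hLν, hν⟩ : ∃ ν ∈ supportedOn 𝕜 s, L ν = 0 ∧ ∃ i, 0 < ν i := by
    obtain ⟨i, hi⟩ := Function.ne_iff.mp hμ
    rcases hi.lt_or_gt with hi | hi
    · exact ⟨-μ, neg_mem hμs, by simp [hLμ], i, by simpa using hi⟩
    · exact ⟨μ, hμs, hLμ, i, hi⟩
  rintro _ ⟨y, ⟨hys, hy⟩, rfl⟩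
  obtain ⟨t, i, hi, hy', hyi⟩ := exists_nonneg_sub_smul_apply_eq_zero hy hν
  have his : i ∈ s := by
    by_contra h
    exact hi.ne' (mem_supportedOn.mp hνs i h)
  refine Set.mem_biUnion his ⟨y - t • ν, ⟨mem_supportedOn.mpr fun j hj => ?_, hy'⟩, by simp [hLν]⟩
  by_cases hji : j = i
  · simpa [hji] using hyi
  · have hjs : j ∉ s := fun h => hj (mem_erase.mpr ⟨hji, h⟩)
    simp [mem_supportedOn.mp hys j hjs, mem_supportedOn.mp hνs j hjs]

end ConicCaratheodory

section ClosedCone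

variable {ι E : Type*} [Fintype ι] [AddCommGroup E] [Module ℝ E] [TopologicalSpace E]
  [IsTopologicalAddGroup E] [ContinuousSMul ℝ E] [T2Space E]

lemma isClosed_image_supportedOn_nonneg (L : (ι → ℝ) →ₗ[ℝ] E) (s : Finset ι) :
    IsClosed (L '' (supportedOn ℝ s ∩ Set.Ici 0)) := by
  classical
  induction s using Finset.strongInduction with
  | H s ih =>
  by_cases hinj : LinearMap.ker (L.domRestrict (supportedOn ℝ s)) = ⊥
  · have himage : L '' (supportedOn ℝ s ∩ Set.Ici 0) =
        L.domRestrict (supportedOn ℝ s) '' (Subtype.val ⁻¹' Set.Ici 0) := by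
      rw [← Subtype.image_preimage_coe, ← Set.image_comp]
      rfl
    rw [himage]
    exact (LinearMap.isClosedEmbedding_of_injective hinj).isClosedMap _
      (isClosed_Ici.preimage continuous_subtype_val)
  · obtain ⟨⟨μ, hμs⟩, hLμ, hμ⟩ := (Submodule.ne_bot_iff _).mp hinj
    rw [image_supportedOn_nonneg_eq_iUnion L hμs (by simpa using hμ) (by simpa using hLμ)]
    exact isClosed_biUnion_finset fun i hi => ih _ (erase_ssubset hi)

theorem LinearMap.isClosed_image_Ici_zero (L : (ι → ℝ) →ₗ[ℝ] E) : IsClosed (L '' Set.Ici 0) := by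
  simpa using isClosed_image_supportedOn_nonneg L univ

end ClosedCone

lemma Sum.exists_eq_elim_const {α β : Type*} (z : α ⊕ Unit → β) :
    ∃ f b, z = Sum.elim f fun _ => b :=
  ⟨z ∘ Sum.inl, z (.inr ()), by ext (i | i) <;> rfl⟩

namespace Matrix

variable {m n : Type*}

theorem exists_nonneg_mulVec_eq_iff [Fintype m] [Fintype n] (A : Matrix m n ℝ) (b : m → ℝ) :
    (∃ x, 0 ≤ x ∧ A *ᵥ x = b) ↔ ∀ y, 0 ≤ Aᵀ *ᵥ y → 0 ≤ b ⬝ᵥ y := by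
  classical
  constructor
  · rintro ⟨x, hx, rfl⟩ y hy
    rw [dotProduct_comm, dotProduct_mulVec, ← mulVec_transpose]
    exact dotProduct_nonneg_of_nonneg hy hx
  · intro h
    by_contra hb
    let C : ProperCone ℝ (m → ℝ) :=
      { toSubmodule := (PointedCone.positive ℝ (n → ℝ)).map A.mulVecLin
        isClosed' := A.mulVecLin.isClosed_image_Ici_zero }
    obtain ⟨f, hfC, hfb⟩ := C.hyperplane_separation_point (x₀ := b)
      fun ⟨x, hx, hAx⟩ => hb ⟨x, hx, hAx⟩
    set y := (dotProductEquiv ℝ m).symm f.toLinearMap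
    have hf : ∀ v, y ⬝ᵥ v = f v := fun v =>
      congrArg (fun g : Module.Dual ℝ (m → ℝ) => g v) ((dotProductEquiv ℝ m).apply_symm_apply _)
    refine (h y fun j => show 0 ≤ (Aᵀ *ᵥ y) j from ?_).not_gt (by rwa [dotProduct_comm, hf])
    have hcol : A *ᵥ Pi.single j 1 ∈ C := ⟨Pi.single j 1, Pi.single_nonneg.mpr zero_le_one, rfl⟩
    simpa only [← hf, dotProduct_mulVec, dotProduct_single_one, ← mulVec_transpose]
      using hfC _ hcol

def homogenization (A : Matrix m n ℝ) (b : m → ℝ) : Matrix (n ⊕ Unit) (m ⊕ Unit) ℝ :=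
  fromBlocks Aᵀ 0 (replicateRow Unit b) 1

lemma homogenization_mulVec [Fintype m] (A : Matrix m n ℝ) (b y : m → ℝ) (t : ℝ) :
    homogenization A b *ᵥ Sum.elim y (fun _ => t) = Sum.elim (Aᵀ *ᵥ y) (fun _ => b ⬝ᵥ y + t) := by
  simp [homogenization, fromBlocks_mulVec, replicateRow_mulVec_eq_const]
  rfl

lemma homogenization_transpose_mulVec [Fintype n] (A : Matrix m n ℝ) (b : m → ℝ) (x : n → ℝ)
    (s : ℝ) :
    (homogenization A b)ᵀ *ᵥ Sum.elim x (fun _ => s) = Sum.elim (A *ᵥ x + s • b) (fun _ => s) := by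
  rw [homogenization, fromBlocks_transpose, fromBlocks_mulVec]
  ext (i | i) <;> simp [mulVec, dotProduct, mul_comm]

lemma exists_nonneg_homogenization_mulVec_eq_iff [Fintype m] (A : Matrix m n ℝ) (b : m → ℝ)
    (c : n → ℝ) (d : ℝ) :
    (∃ z, 0 ≤ z ∧ homogenization A b *ᵥ z = Sum.elim c (fun _ => d)) ↔
      ∃ y, 0 ≤ y ∧ Aᵀ *ᵥ y = c ∧ b ⬝ᵥ y ≤ d := by
  constructor
  · rintro ⟨z, hz, hMz⟩
    obtain ⟨y, t, rfl⟩ := Sum.exists_eq_elim_const z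
    rw [homogenization_mulVec] at hMz
    have hd : b ⬝ᵥ y + t = d := congrFun hMz (.inr ())
    have ht : 0 ≤ t := hz (.inr ())
    exact ⟨y, fun i => hz (.inl i), funext fun j => congrFun hMz (.inl j), by linarith⟩
  · rintro ⟨y, hy, hAy, hby⟩
    refine ⟨Sum.elim y (fun _ => d - b ⬝ᵥ y), ?_, by simp [homogenization_mulVec, hAy]⟩
    rintro (i | i)
    exacts [hy i, sub_nonneg.mpr hby]

theorem exists_nonneg_transpose_mulVec_eq_dotProduct_le_iff [Fintype m] [Fintype n]
    (A : Matrix m n ℝ) (b : m → ℝ) (c : n → ℝ) (d : ℝ) :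
    (∃ y, 0 ≤ y ∧ Aᵀ *ᵥ y = c ∧ b ⬝ᵥ y ≤ d) ↔
      ∀ x (s : ℝ), 0 ≤ s → 0 ≤ A *ᵥ x + s • b → 0 ≤ c ⬝ᵥ x + s * d := by
  rw [← exists_nonneg_homogenization_mulVec_eq_iff, exists_nonneg_mulVec_eq_iff]
  constructor
  · intro h x s hs hx
    have hxs : 0 ≤ (homogenization A b)ᵀ *ᵥ Sum.elim x fun _ => s := by
      rw [homogenization_transpose_mulVec]
      rintro (i | i)
      exacts [hx i, hs]
    simpa [mul_comm] using h _ hxs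
  · intro h w hw
    obtain ⟨x, s, rfl⟩ := Sum.exists_eq_elim_const w
    rw [homogenization_transpose_mulVec] at hw
    simpa [mul_comm] using h x s (hw (.inr ())) fun i => hw (.inl i)

lemma transpose_mulVec_dotProduct_le [Fintype m] [Fintype n] {A : Matrix m n ℝ} {b y : m → ℝ}
    {x : n → ℝ} {d : ℝ} (hy : 0 ≤ y) (hby : b ⬝ᵥ y ≤ d) (hx : A *ᵥ x ≤ b) :
    (Aᵀ *ᵥ y) ⬝ᵥ x ≤ d :=
  calc (Aᵀ *ᵥ y) ⬝ᵥ x = y ⬝ᵥ A *ᵥ x := by rw [mulVec_transpose, dotProduct_mulVec]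
    _ ≤ y ⬝ᵥ b := dotProduct_le_dotProduct_of_nonneg_left hx hy
    _ ≤ d := by rwa [dotProduct_comm]

section Polyhedron

variable [Fintype n] {A : Matrix m n ℝ} {b : m → ℝ} {c : n → ℝ} {d : ℝ} {x₀ : n → ℝ}

lemma dotProduct_nonpos_of_mulVec_nonpos (hx₀ : A *ᵥ x₀ ≤ b)
    (hsub : ∀ x, A *ᵥ x ≤ b → c ⬝ᵥ x ≤ d) {u : n → ℝ} (hu : A *ᵥ u ≤ 0) : c ⬝ᵥ u ≤ 0 := by
  by_contra! hcu
  set t := (|d - c ⬝ᵥ x₀| + 1) / c ⬝ᵥ u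
  have ht : 0 ≤ t := by positivity
  have hfeas : A *ᵥ (x₀ + t • u) ≤ b := by
    rw [mulVec_add, mulVec_smul]
    exact add_le_of_le_of_nonpos hx₀ (smul_nonpos_of_nonneg_of_nonpos ht hu)
  have hval : c ⬝ᵥ (x₀ + t • u) = c ⬝ᵥ x₀ + (|d - c ⬝ᵥ x₀| + 1) := by
    rw [dotProduct_add, dotProduct_smul, smul_eq_mul, div_mul_cancel₀ _ hcu.ne']
  linarith [hsub _ hfeas, le_abs_self (d - c ⬝ᵥ x₀)]

lemma dotProduct_add_mul_nonneg_of_subset (hx₀ : A *ᵥ x₀ ≤ b) (hsub : ∀ x, A *ᵥ x ≤ b → c ⬝ᵥ x ≤ d)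
    {x : n → ℝ} {s : ℝ} (hs : 0 ≤ s) (hx : 0 ≤ A *ᵥ x + s • b) : 0 ≤ c ⬝ᵥ x + s * d := by
  rcases hs.eq_or_lt with rfl | hs
  · have hAx : A *ᵥ -x ≤ 0 := by simpa [mulVec_neg] using hx
    simpa using dotProduct_nonpos_of_mulVec_nonpos hx₀ hsub hAx
  · have hAx : A *ᵥ (-s⁻¹ • x) = b - s⁻¹ • (A *ᵥ x + s • b) := by
      rw [mulVec_smul, smul_add, smul_smul, inv_mul_cancel₀ hs.ne', one_smul, neg_smul]
      abel
    have hfeas : A *ᵥ (-s⁻¹ • x) ≤ b := hAx ▸ sub_le_self b (smul_nonneg (inv_nonneg.mpr hs.le) hx)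
    have hcx : c ⬝ᵥ x + s * d = s * (d - c ⬝ᵥ (-s⁻¹ • x)) := by
      rw [dotProduct_smul, smul_eq_mul]
      field_simp
      ring
    rw [hcx]
    exact mul_nonneg hs.le (sub_nonneg.mpr (hsub _ hfeas))

end Polyhedron

end Matrix

/-- Farkas' Lemma (inclusion form): a nonempty polyhedron {x | A x ≤ b} is
contained in the half-space {x | cᵀx ≤ d} iff there is y ≥ 0 with Aᵀy = c and
bᵀy ≤ d. -/
theorem stmt4 {m n : ℕ} (A : Matrix (Fin m) (Fin n) ℝ) (b : Fin m → ℝ)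
    (c : Fin n → ℝ) (d : ℝ)
    (hne : ∃ x : Fin n → ℝ, A.mulVec x ≤ b) :
    {x : Fin n → ℝ | A.mulVec x ≤ b} ⊆ {x : Fin n → ℝ | c ⬝ᵥ x ≤ d} ↔
      ∃ y : Fin m → ℝ, 0 ≤ y ∧ Aᵀ.mulVec y = c ∧ b ⬝ᵥ y ≤ d := by
  constructor
  · intro hsub
    obtain ⟨x₀, hx₀⟩ := hne
    exact (exists_nonneg_transpose_mulVec_eq_dotProduct_le_iff A b c d).mpr
      fun x s hs hx => dotProduct_add_mul_nonneg_of_subset hx₀ (fun _ hx => hsub hx) hs hx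
  · rintro ⟨y, hy, rfl, hby⟩ x hx
    exact transpose_mulVec_dotProduct_le hy hby hx
end

section
/- (Motzkin's Transposition Theorem, simplified form) Let A ∈ ℝ^{m×n}, B ∈ ℝ^{k×n}, b ∈ ℝ^m, c ∈ ℝ^k, and assume {x | A x ≤ b} ≠ ∅. Then {x | A x ≤ b} ∩ {x | B x < c} = ∅ if and only if there exist y ∈ ℝ^m and z ∈ ℝ^k with y ≥ 0, z ≥ 0, 1ᵀz > 0, Aᵀy + Bᵀz = 0, and bᵀy + cᵀz ≤ 0. -/
/-!
Every finitely generated cone is closed: by a conic Carathéodory argument it is the finite union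
of the cones spanned by its linearly independent subfamilies, each the image of a closed orthant
under an injective linear map. Separation from a closed cone then gives Farkas' lemma.

Motzkin's theorem is Farkas' lemma for the homogenized system in the variables `(x, s, t)` with
rows `(A i, 0, b i)`, `(B j, 1, c j)`, `(0, 0, 1)` and right-hand side `(0, 1, 0)`. A nonnegative
combination of the rows equal to `(0, 1, 0)` is a certificate `(y, z)` with `∑ z = 1`. Otherwise
some `(x, s, t)` has nonnegative product with every row and `s < 0`; then `t ≥ 0`, and
`(r x₀ - x) / (r + t)` is a strict solution for a feasible `x₀` and small `r > 0`.
-/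

open Function Set Filter Topology Matrix

section Caratheodory

variable {ι 𝕜 E : Type*} [Fintype ι] [Field 𝕜] [LinearOrder 𝕜] [IsStrictOrderedRing 𝕜]
  [AddCommGroup E] [Module 𝕜 E]

theorem exists_nonneg_sub_smul_support_ssubset {y g : ι → 𝕜} (hy : 0 ≤ y)
    (hgy : support g ⊆ support y) (hg : ∃ i, 0 < g i) :
    ∃ τ : 𝕜, 0 ≤ y - τ • g ∧ support (y - τ • g) ⊂ support y := by
  obtain ⟨i₀, hi₀, hmin⟩ := Finset.exists_min_image {i | 0 < g i} (fun i => y i / g i)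
    (by simpa [Finset.Nonempty] using hg)
  rw [Finset.mem_filter_univ] at hi₀
  refine ⟨y i₀ / g i₀, fun i => ?_, ?_⟩
  · simp only [Pi.zero_apply, Pi.sub_apply, Pi.smul_apply, smul_eq_mul, sub_nonneg]
    rcases lt_or_ge 0 (g i) with hgi | hgi
    · simpa [le_div_iff₀ hgi] using hmin i (by simpa using hgi)
    · exact (mul_nonpos_of_nonneg_of_nonpos (div_nonneg (hy i₀) hi₀.le) hgi).trans (hy i)
  · refine ssubset_of_subset_not_subset (fun i hi => ?_) fun h => h (hgy hi₀.ne') ?_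
    · by_contra hyi
      have hgi : g i = 0 := by_contra fun h => hyi (hgy h)
      simp_all
    · simp [hi₀.ne']

theorem exists_relation_pos_of_not_linearIndepOn {v : ι → E} {s : Set ι} (h : ¬LinearIndepOn 𝕜 v s) :
    ∃ g : ι → 𝕜, support g ⊆ s ∧ ∑ i, g i • v i = 0 ∧ ∃ i, 0 < g i := by
  obtain ⟨f, hfs, hf0, hf⟩ := linearDepOn_iff'.mp h
  obtain ⟨i, hi⟩ : ∃ i, f i ≠ 0 := by simpa [DFunLike.ext_iff] using hf
  have hsum : ∑ i, f i • v i = 0 := by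
    rwa [Finsupp.linearCombination_apply, Finsupp.sum_fintype _ _ (by simp)] at hf0
  have hsupp : support f ⊆ s := by simpa [Finsupp.mem_supported] using hfs
  rcases hi.lt_or_gt with hneg | hpos
  · exact ⟨-f, by simpa using hsupp, by simp [hsum], i, by simpa using hneg⟩
  · exact ⟨f, hsupp, hsum, i, hpos⟩

theorem exists_nonneg_linearIndepOn_support (v : ι → E) {y : ι → 𝕜} (hy : 0 ≤ y) :
    ∃ z : ι → 𝕜, 0 ≤ z ∧ ∑ i, z i • v i = ∑ i, y i • v i ∧ LinearIndepOn 𝕜 v (support z) := by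
  induction hn : (support y).ncard using Nat.strong_induction_on generalizing y with
  | _ n ih =>
    by_cases hli : LinearIndepOn 𝕜 v (support y)
    · exact ⟨y, hy, rfl, hli⟩
    obtain ⟨g, hgy, hg0, hg⟩ := exists_relation_pos_of_not_linearIndepOn hli
    obtain ⟨τ, hz, hzy⟩ := exists_nonneg_sub_smul_support_ssubset hy hgy hg
    obtain ⟨z, hz0, hzsum, hzli⟩ := ih _ (hn ▸ ncard_lt_ncard hzy (toFinite _)) hz rfl
    refine ⟨z, hz0, ?_, hzli⟩
    simp [hzsum, sub_smul, Finset.sum_sub_distrib, mul_smul, ← Finset.smul_sum, hg0]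

end Caratheodory

namespace PointedCone

variable {ι E : Type*} [Fintype ι] [AddCommGroup E] [Module ℝ E]

theorem mem_hull_range_iff {v : ι → E} {x : E} :
    x ∈ hull ℝ (range v) ↔ ∃ c : ι → ℝ, 0 ≤ c ∧ ∑ i, c i • v i = x := by
  rw [Submodule.mem_span_range_iff_exists_fun]
  constructor
  · rintro ⟨c, rfl⟩
    exact ⟨fun i => c i, fun i => (c i).2, rfl⟩
  · rintro ⟨c, hc, rfl⟩
    exact ⟨fun i => ⟨c i, hc i⟩, rfl⟩

theorem hull_range_eq_iUnion_linearIndepOn (v : ι → E) :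
    (hull ℝ (range v) : Set E) = ⋃ s : {s : Set ι // LinearIndepOn ℝ v s}, hull ℝ (v '' s.1) := by
  ext x
  simp only [SetLike.mem_coe, mem_iUnion, Subtype.exists, exists_prop]
  constructor
  · intro hx
    obtain ⟨y, hy, rfl⟩ := mem_hull_range_iff.mp hx
    obtain ⟨z, hz, hzy, hli⟩ := exists_nonneg_linearIndepOn_support v hy
    refine ⟨support z, hli, hzy ▸ Submodule.sum_mem _ fun i _ => ?_⟩
    by_cases hi : z i = 0
    · simp [hi]
    · exact smul_mem _ (hz i) (subset_hull ⟨i, hi, rfl⟩)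
  · rintro ⟨s, -, hx⟩
    exact Submodule.span_mono (image_subset_range v s) hx

variable [TopologicalSpace E] [IsTopologicalAddGroup E] [ContinuousSMul ℝ E] [T2Space E]

theorem isClosed_hull_range_of_linearIndependent {v : ι → E} (hv : LinearIndependent ℝ v) :
    IsClosed (hull ℝ (range v) : Set E) := by
  have hcone : (hull ℝ (range v) : Set E) = Fintype.linearCombination ℝ v '' Ici 0 := by
    ext x
    simp [mem_hull_range_iff, Fintype.linearCombination_apply]
  rw [hcone]
  exact (LinearMap.isClosedEmbedding_of_injective (LinearMap.ker_eq_bot.mpr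
    hv.fintypeLinearCombination_injective)).isClosedMap _ isClosed_Ici

theorem isClosed_hull_range (v : ι → E) : IsClosed (hull ℝ (range v) : Set E) := by
  classical
  rw [hull_range_eq_iUnion_linearIndepOn]
  refine isClosed_iUnion_of_finite fun s => ?_
  rw [image_eq_range]
  exact isClosed_hull_range_of_linearIndependent s.2

theorem mem_hull_range_or_exists_strongDual [LocallyConvexSpace ℝ E] (v : ι → E) (u : E) :
    u ∈ hull ℝ (range v) ∨ ∃ f : StrongDual ℝ E, (∀ i, 0 ≤ f (v i)) ∧ f u < 0 := by
  by_cases hu : u ∈ hull ℝ (range v)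
  · exact .inl hu
  let C : ProperCone ℝ E := ⟨hull ℝ (range v), isClosed_hull_range v⟩
  obtain ⟨f, hf, hfu⟩ := ProperCone.hyperplane_separation_point C hu
  exact .inr ⟨f, fun i => hf _ (subset_hull ⟨i, rfl⟩), hfu⟩

end PointedCone

theorem dotProduct_lt_dotProduct_of_forall_lt {α R : Type*} [Fintype α] [Semiring R]
    [LinearOrder R] [IsStrictOrderedRing R] {u v w : α → R} (huv : ∀ i, u i < v i) (hw : 0 ≤ w)
    (hw_sum : 0 < ∑ i, w i) : w ⬝ᵥ u < w ⬝ᵥ v := by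
  obtain ⟨j, hj⟩ : ∃ j, 0 < w j := by
    by_contra! h
    exact hw_sum.not_ge (Finset.sum_nonpos fun j _ => h j)
  exact Finset.sum_lt_sum (fun i _ => mul_le_mul_of_nonneg_left (huv i).le (hw i))
    ⟨j, Finset.mem_univ j, mul_lt_mul_of_pos_left (huv j) hj⟩

namespace Matrix

variable {ι κ α : Type*} [Fintype α]

theorem exists_nonneg_vecMul_eq_or_exists_mulVec_nonneg [Fintype ι] (M : Matrix ι α ℝ)
    (d : α → ℝ) : (∃ y, 0 ≤ y ∧ y ᵥ* M = d) ∨ ∃ x, 0 ≤ M *ᵥ x ∧ d ⬝ᵥ x < 0 := by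
  classical
  rcases PointedCone.mem_hull_range_or_exists_strongDual M d with hd | ⟨f, hf, hfd⟩
  · obtain ⟨y, hy, rfl⟩ := PointedCone.mem_hull_range_iff.mp hd
    exact .inl ⟨y, hy, vecMul_eq_sum y M⟩
  · have hf_apply (w : α → ℝ) : f w = w ⬝ᵥ fun j => f (Pi.single j 1) := by
      conv_lhs => rw [pi_eq_sum_univ' w]
      simp [dotProduct]
    exact .inr ⟨_, fun i => (hf_apply (M i)).symm ▸ hf i, hf_apply d ▸ hfd⟩

variable {A : Matrix ι α ℝ} {B : Matrix κ α ℝ} {b : ι → ℝ} {c : κ → ℝ}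

theorem not_forall_lt_of_certificate [Fintype ι] [Fintype κ] {y : ι → ℝ} {z : κ → ℝ}
    (hy : 0 ≤ y) (hz : 0 ≤ z) (hz_sum : 0 < ∑ j, z j) (hyz : Aᵀ *ᵥ y + Bᵀ *ᵥ z = 0)
    (hbc : b ⬝ᵥ y + c ⬝ᵥ z ≤ 0) {x : α → ℝ} (hx : A *ᵥ x ≤ b) : ¬∀ j, (B *ᵥ x) j < c j := by
  intro hxB
  have hA : y ⬝ᵥ A *ᵥ x ≤ y ⬝ᵥ b := dotProduct_le_dotProduct_of_nonneg_left hx hy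
  have hB : z ⬝ᵥ B *ᵥ x < z ⬝ᵥ c := dotProduct_lt_dotProduct_of_forall_lt hxB hz hz_sum
  have hzero : y ⬝ᵥ A *ᵥ x + z ⬝ᵥ B *ᵥ x = 0 := by
    simpa [dotProduct_mulVec, ← mulVec_transpose, add_dotProduct] using congrArg (· ⬝ᵥ x) hyz
  rw [dotProduct_comm b, dotProduct_comm c] at hbc
  linarith

theorem exists_mulVec_le_and_lt_of_homogeneous [Finite κ] {x₀ : α → ℝ} (hx₀ : A *ᵥ x₀ ≤ b)
    {x : α → ℝ} {s t : ℝ} (hs : s < 0) (ht : 0 ≤ t) (hA : ∀ i, 0 ≤ (A *ᵥ x) i + t * b i)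
    (hB : ∀ j, 0 ≤ (B *ᵥ x) j + s + t * c j) :
    ∃ x', A *ᵥ x' ≤ b ∧ ∀ j, (B *ᵥ x') j < c j := by
  -- mixing in `x₀` with a small weight `r > 0` also covers the case `t = 0`
  have hsmall : ∀ᶠ r in 𝓝[>] (0 : ℝ), ∀ j, r * ((B *ᵥ x₀) j - c j) < -s :=
    eventually_all.2 fun j => nhdsWithin_le_nhds <|
      ((continuous_mul_const _).tendsto' 0 0 (zero_mul _)).eventually (gt_mem_nhds (neg_pos.2 hs))
  obtain ⟨r, hr, hr0⟩ := (hsmall.and self_mem_nhdsWithin).exists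
  have hrt : 0 < r + t := add_pos_of_pos_of_nonneg hr0 ht
  refine ⟨(r + t)⁻¹ • (r • x₀ - x), fun i => ?_, fun j => ?_⟩
  · have := mul_le_mul_of_nonneg_left (hx₀ i) hr0.le
    simp only [mulVec_smul, mulVec_sub, Pi.smul_apply, Pi.sub_apply, smul_eq_mul]
    rw [inv_mul_le_iff₀ hrt]
    linarith [hA i]
  · simp only [mulVec_smul, mulVec_sub, Pi.smul_apply, Pi.sub_apply, smul_eq_mul]
    rw [inv_mul_lt_iff₀ hrt]
    linarith [hB j, hr j]

variable (A B b c) in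
/-- The columns are `x`, then `s` (index `0`) and `t` (index `1`). -/
def motzkinHomogenization : Matrix (ι ⊕ κ ⊕ Unit) (α ⊕ Fin 2) ℝ :=
  of <| Sum.elim (fun i => Sum.elim (A i) ![0, b i]) <|
    Sum.elim (fun j => Sum.elim (B j) ![1, c j]) fun _ => Sum.elim 0 ![0, 1]

theorem exists_certificate_of_forall_mulVec_le [Fintype ι] [Fintype κ]
    (hne : ∃ x₀, A *ᵥ x₀ ≤ b) (hinfeas : ∀ x, A *ᵥ x ≤ b → ∃ j, c j ≤ (B *ᵥ x) j) :
    ∃ (y : ι → ℝ) (z : κ → ℝ), 0 ≤ y ∧ 0 ≤ z ∧ 0 < ∑ j, z j ∧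
      Aᵀ *ᵥ y + Bᵀ *ᵥ z = 0 ∧ b ⬝ᵥ y + c ⬝ᵥ z ≤ 0 := by
  rcases (motzkinHomogenization A B b c).exists_nonneg_vecMul_eq_or_exists_mulVec_nonneg
    (Sum.elim 0 ![1, 0]) with ⟨w, hw, hwd⟩ | ⟨x, hx, hxd⟩
  · have hcol := congrFun hwd
    simp only [motzkinHomogenization, vecMul, dotProduct, Fintype.sum_sum_type, of_apply] at hcol
    have hz_sum : ∑ j, w (.inr (.inl j)) = 1 := by simpa using hcol (.inr 0)
    have hbc : b ⬝ᵥ (w ∘ .inl) + c ⬝ᵥ (w ∘ .inr ∘ .inl) + w (.inr (.inr ())) = 0 := by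
      simpa [dotProduct, mul_comm, add_assoc] using hcol (.inr 1)
    refine ⟨w ∘ .inl, w ∘ .inr ∘ .inl, fun i => hw _, fun j => hw _, hz_sum ▸ one_pos, ?_, ?_⟩
    · ext l
      simpa [mulVec, dotProduct, mul_comm] using hcol (.inl l)
    · have hslack : 0 ≤ w (.inr (.inr ())) := hw _
      linarith
  · obtain ⟨x₀, hx₀⟩ := hne
    have hs : x (.inr 0) < 0 := by simpa [dotProduct] using hxd
    have ht : 0 ≤ x (.inr 1) := by
      simpa [motzkinHomogenization, mulVec, dotProduct] using hx (.inr (.inr ()))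
    have hA (i) : 0 ≤ (A *ᵥ (x ∘ .inl)) i + x (.inr 1) * b i := by
      simpa [motzkinHomogenization, mulVec, dotProduct, mul_comm] using hx (.inl i)
    have hB (j) : 0 ≤ (B *ᵥ (x ∘ .inl)) j + x (.inr 0) + x (.inr 1) * c j := by
      simpa [motzkinHomogenization, mulVec, dotProduct, mul_comm, add_assoc]
        using hx (.inr (.inl j))
    obtain ⟨x', hx'A, hx'B⟩ := exists_mulVec_le_and_lt_of_homogeneous hx₀ hs ht hA hB
    obtain ⟨j, hj⟩ := hinfeas x' hx'A
    exact absurd (hx'B j) hj.not_gt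

end Matrix

/-- Motzkin's Transposition Theorem (simplified form). -/
theorem stmt7 {m k n : ℕ} (A : Matrix (Fin m) (Fin n) ℝ) (B : Matrix (Fin k) (Fin n) ℝ)
    (b : Fin m → ℝ) (c : Fin k → ℝ)
    (hne : ∃ x : Fin n → ℝ, A.mulVec x ≤ b) :
    ({x : Fin n → ℝ | A.mulVec x ≤ b} ∩ {x : Fin n → ℝ | ∀ i, B.mulVec x i < c i} = ∅) ↔
      ∃ (y : Fin m → ℝ) (z : Fin k → ℝ), 0 ≤ y ∧ 0 ≤ z ∧ 0 < ∑ i, z i ∧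
        Aᵀ.mulVec y + Bᵀ.mulVec z = 0 ∧ b ⬝ᵥ y + c ⬝ᵥ z ≤ 0 := by
  rw [eq_empty_iff_forall_notMem]
  constructor
  · intro hinfeas
    refine exists_certificate_of_forall_mulVec_le hne fun x hx => ?_
    by_contra! hlt
    exact hinfeas x ⟨hx, hlt⟩
  · rintro ⟨y, z, hy, hz, hz_sum, hyz, hbc⟩ x ⟨hxA, hxB⟩
    exact not_forall_lt_of_certificate hy hz hz_sum hyz hbc hxA hxB
end

section
/- (Hoeffding's inequality for supermartingales) Let {X_n}_{n≥1} be a supermartingale with respect to a filtration {F_n} with X_1 constant, and let {[a_n,b_n]} be intervals of positive length such that X_{n+1} − X_n ∈ [a_{n+1}, b_{n+1}] almost surely for all n. Then for every n ≥ 1 and every λ > 0, P(X_n − X_1 ≥ λ) ≤ exp(−2λ² / ∑_{k=2}^{n} (b_k − a_k)²). -/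
/-!
Write `D = X (k + 1) - X k ∈ [a, b]`, whose conditional mean given `𝒢 k` is `≤ 0`. By convexity
`exp (t * D)` lies below the secant of `x ↦ exp (t * x)` over `[a, b]`, an increasing affine
function for `t ≥ 0`; so `μ[exp (t * D) | 𝒢 k]` is at most the secant at `min b 0`. That is either
`exp (t * b) ≤ 1`, or the moment generating function of the mean-zero law on `{a, b}`, which
Hoeffding's lemma bounds by `exp ((b - a) ^ 2 * t ^ 2 / 8)`. Pulling out the `𝒢 k`-measurable
factor `exp (t * (X k - X 1))` and iterating gives
`∫ exp (t * (X n - X 1)) ≤ exp (S * t ^ 2 / 8)` with `S = ∑ (b k - a k) ^ 2`, and the Chernoff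
bound at `t = 4 λ / S` finishes.
-/

open MeasureTheory ProbabilityTheory Real

lemma exp_mul_le_secant {a b t x : ℝ} (hab : a < b) (hx : x ∈ Set.Icc a b) :
    exp (t * x) ≤ (b * exp (t * a) - a * exp (t * b)) / (b - a)
      + (exp (t * b) - exp (t * a)) / (b - a) * x := by
  have hba : b - a ≠ 0 := (sub_pos.2 hab).ne'
  have h := convexOn_exp.2 (Set.mem_univ (t * a)) (Set.mem_univ (t * b))
    (div_nonneg (sub_nonneg.2 hx.2) (sub_pos.2 hab).le)
    (div_nonneg (sub_nonneg.2 hx.1) (sub_pos.2 hab).le)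
    (by rw [← add_div, sub_add_sub_cancel, div_self hba])
  have harg : (b - x) / (b - a) * (t * a) + (x - a) / (b - a) * (t * b) = t * x := by
    field_simp; ring
  simp only [smul_eq_mul, harg] at h
  refine h.trans_eq ?_
  field_simp; ring

/-- The left side is the moment generating function at `t` of the mean-zero law on `{a, b}`. -/
lemma secant_exp_zero_le {a b t : ℝ} (ha : a ≤ 0) (hb : 0 ≤ b) (hab : a < b) :
    (b * exp (t * a) - a * exp (t * b)) / (b - a) ≤ exp (((b - a) / 2) ^ 2 * t ^ 2 / 2) := by
  have hba : 0 < b - a := sub_pos.2 hab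
  set p := b / (b - a)
  set q := -a / (b - a)
  have hp : 0 ≤ p := div_nonneg hb hba.le
  have hq : 0 ≤ q := div_nonneg (neg_nonneg.2 ha) hba.le
  have hpq : p + q = 1 := by rw [← add_div, ← sub_eq_add_neg, div_self hba.ne']
  set ν : Measure ℝ := ENNReal.ofReal p • Measure.dirac a + ENNReal.ofReal q • Measure.dirac b
  have hν : IsProbabilityMeasure ν := ⟨by
    simp [ν, ← ENNReal.ofReal_add hp hq, hpq]⟩
  have hν_integral (f : ℝ → ℝ) : ∫ x, f x ∂ν = p * f a + q * f b := by
    have hi (c : ℝ) (x : ℝ) : Integrable f (ENNReal.ofReal c • Measure.dirac x) :=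
      (integrable_dirac enorm_lt_top).smul_measure ENNReal.ofReal_ne_top
    rw [integral_add_measure (hi p a) (hi q b), integral_smul_measure, integral_smul_measure,
      integral_dirac, integral_dirac]
    simp [ENNReal.toReal_ofReal hp, ENNReal.toReal_ofReal hq]
  have hsupp : ∀ᵐ x ∂ν, id x ∈ Set.Icc a b := by
    refine ae_add_measure_iff.2 ⟨Measure.ae_smul_measure ?_ _, Measure.ae_smul_measure ?_ _⟩ <;>
      simp [ae_dirac_eq, hab.le]
  have hmean : ν[id] = 0 := by
    rw [hν_integral]; simp only [id_eq, p, q]; field_simp; ring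
  have h := (hasSubgaussianMGF_of_mem_Icc_of_integral_eq_zero aemeasurable_id hsupp hmean).mgf_le t
  rw [mgf, hν_integral] at h
  convert h using 1
  · simp only [id_eq, p, q]; field_simp; ring
  · simp [abs_of_pos hba]

lemma secant_exp_le_of_nonpos {a b t x : ℝ} (hab : a < b) (ht : 0 ≤ t) (hx : x ∈ Set.Icc a b)
    (hx0 : x ≤ 0) :
    (b * exp (t * a) - a * exp (t * b)) / (b - a) + (exp (t * b) - exp (t * a)) / (b - a) * x
      ≤ exp (((b - a) / 2) ^ 2 * t ^ 2 / 2) := by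
  have hba : 0 < b - a := sub_pos.2 hab
  have hslope : 0 ≤ (exp (t * b) - exp (t * a)) / (b - a) :=
    div_nonneg (sub_nonneg.2 (exp_le_exp.2 (mul_le_mul_of_nonneg_left hab.le ht))) hba.le
  rcases le_or_gt 0 b with hb | hb
  · calc _ ≤ (b * exp (t * a) - a * exp (t * b)) / (b - a) :=
          add_le_of_nonpos_right (mul_nonpos_of_nonneg_of_nonpos hslope hx0)
      _ ≤ _ := secant_exp_zero_le (hx.1.trans hx0) hb hab
  · calc _ ≤ (b * exp (t * a) - a * exp (t * b)) / (b - a)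
            + (exp (t * b) - exp (t * a)) / (b - a) * b := by gcongr; exact hx.2
      _ = exp (t * b) := by field_simp; ring
      _ ≤ 1 := exp_le_one_iff.2 (mul_nonpos_of_nonneg_of_nonpos ht hb.le)
      _ ≤ _ := one_le_exp (by positivity)

section Conditional

variable {Ω : Type*} {m mΩ : MeasurableSpace Ω} {μ : Measure Ω} [IsFiniteMeasure μ]
  {D : Ω → ℝ} {a b t : ℝ}

lemma condExp_exp_mul_le (hm : m ≤ mΩ) (hab : a < b) (ht : 0 ≤ t) (hDint : Integrable D μ)
    (hD : ∀ᵐ ω ∂μ, D ω ∈ Set.Icc a b) (hD0 : μ[D | m] ≤ᵐ[μ] 0) :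
    μ[fun ω => exp (t * D ω) | m] ≤ᵐ[μ] fun _ => exp (((b - a) / 2) ^ 2 * t ^ 2 / 2) := by
  set β := (exp (t * b) - exp (t * a)) / (b - a)
  set α := (b * exp (t * a) - a * exp (t * b)) / (b - a)
  have hsec : μ[fun ω => exp (t * D ω) | m] ≤ᵐ[μ] μ[fun ω => β * D ω + α | m] :=
    condExp_mono (integrable_exp_mul_of_mem_Icc hDint.aemeasurable hD)
      ((hDint.const_mul β).add (integrable_const α))
      (hD.mono fun ω hω => (exp_mul_le_secant hab hω).trans_eq (add_comm _ _))
  have haff := (ContinuousLinearMap.mul ℝ ℝ β).comp_condExp_add_const_comm hm hDint α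
  have hmem := (convex_Icc a b).condExp_mem hm hDint isClosed_Icc hD
  filter_upwards [hsec, haff, hmem, hD0] with ω hle heq hω hω0
  simp only [ContinuousLinearMap.mul_apply'] at heq
  rw [← heq, add_comm] at hle
  exact hle.trans (secant_exp_le_of_nonpos hab ht hω hω0)

lemma integral_exp_mul_add_le (hm : m ≤ mΩ) {Y : Ω → ℝ} (hY : StronglyMeasurable[m] Y)
    (hYint : Integrable (fun ω => exp (t * Y ω)) μ) (hab : a < b) (ht : 0 ≤ t)
    (hDint : Integrable D μ) (hD : ∀ᵐ ω ∂μ, D ω ∈ Set.Icc a b) (hD0 : μ[D | m] ≤ᵐ[μ] 0) :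
    Integrable (fun ω => exp (t * (Y ω + D ω))) μ ∧
      ∫ ω, exp (t * (Y ω + D ω)) ∂μ
        ≤ (∫ ω, exp (t * Y ω) ∂μ) * exp (((b - a) / 2) ^ 2 * t ^ 2 / 2) := by
  set f := fun ω => exp (t * Y ω)
  set g := fun ω => exp (t * D ω)
  have hsplit : (fun ω => exp (t * (Y ω + D ω))) = f * g := by
    ext ω; simp [f, g, mul_add, exp_add]
  have hg : Integrable g μ := integrable_exp_mul_of_mem_Icc hDint.aemeasurable hD
  have hfg : Integrable (f * g) μ := by
    refine hYint.mul_bdd hg.aestronglyMeasurable (c := exp (t * b)) ?_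
    filter_upwards [hD] with ω hω
    rw [norm_of_nonneg (exp_pos _).le]
    exact exp_le_exp.2 (mul_le_mul_of_nonneg_left hω.2 ht)
  have hpull : μ[f * g | m] =ᵐ[μ] f * μ[g | m] :=
    condExp_mul_of_stronglyMeasurable_left (continuous_exp.comp_stronglyMeasurable
      (hY.const_mul t)) hfg hg
  refine ⟨hsplit ▸ hfg, ?_⟩
  calc ∫ ω, exp (t * (Y ω + D ω)) ∂μ = ∫ ω, (μ[f * g | m]) ω ∂μ := by
        rw [hsplit, integral_condExp hm]
    _ = ∫ ω, f ω * (μ[g | m]) ω ∂μ := integral_congr_ae hpull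
    _ ≤ ∫ ω, f ω * exp (((b - a) / 2) ^ 2 * t ^ 2 / 2) ∂μ := by
        refine integral_mono_ae (integrable_condExp.congr hpull) (hYint.mul_const _) ?_
        filter_upwards [condExp_exp_mul_le hm hab ht hDint hD hD0] with ω hω
        exact mul_le_mul_of_nonneg_left hω (exp_pos _).le
    _ = _ := integral_mul_const _ _

end Conditional

lemma integral_exp_mul_sub_le {Ω : Type*} {mΩ : MeasurableSpace Ω} {μ : Measure Ω}
    [IsProbabilityMeasure μ] {𝒢 : Filtration ℕ mΩ} {X : ℕ → Ω → ℝ} (hadapt : StronglyAdapted 𝒢 X)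
    (hint : ∀ n, Integrable (X n) μ) {n₀ : ℕ}
    (hsuper : ∀ n, n₀ ≤ n → ∀ᵐ ω ∂μ, (μ[X (n + 1) | 𝒢 n]) ω ≤ X n ω)
    {a b : ℕ → ℝ} (hab : ∀ n, a n < b n)
    (hinc : ∀ n, n₀ ≤ n → ∀ᵐ ω ∂μ, X (n + 1) ω - X n ω ∈ Set.Icc (a (n + 1)) (b (n + 1)))
    {t : ℝ} (ht : 0 ≤ t) :
    ∀ n, n₀ ≤ n → Integrable (fun ω => exp (t * (X n ω - X n₀ ω))) μ ∧
      ∫ ω, exp (t * (X n ω - X n₀ ω)) ∂μ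
        ≤ exp ((∑ k ∈ Finset.Icc (n₀ + 1) n, ((b k - a k) / 2) ^ 2) * t ^ 2 / 2) := by
  refine Nat.le_induction ?_ fun n hn ih => ?_
  · simp
  have hD0 : μ[X (n + 1) - X n | 𝒢 n] ≤ᵐ[μ] 0 := by
    filter_upwards [condExp_sub (hint (n + 1)) (hint n) (𝒢 n), hsuper n hn] with ω h hω
    rw [h, Pi.sub_apply, condExp_of_stronglyMeasurable (𝒢.le n) (hadapt n) (hint n)]
    exact sub_nonpos.2 hω
  obtain ⟨hint_succ, hle⟩ := integral_exp_mul_add_le (𝒢.le n)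
    ((hadapt n).sub ((hadapt n₀).mono (𝒢.mono hn))) ih.1 (hab (n + 1)) ht
    ((hint (n + 1)).sub (hint n)) (hinc n hn) hD0
  simp only [Pi.sub_apply, sub_add_sub_cancel'] at hint_succ hle
  refine ⟨hint_succ, hle.trans ?_⟩
  rw [Finset.sum_Icc_succ_top (by omega), add_mul, add_div, exp_add]
  gcongr
  exact ih.2

lemma measureReal_ge_le_of_integral_exp_le {Ω : Type*} {mΩ : MeasurableSpace Ω}
    {μ : Measure Ω} [IsProbabilityMeasure μ] {Y : Ω → ℝ} {c ε : ℝ} (hc : 0 ≤ c) (hε : 0 ≤ ε)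
    (h : ∀ t, 0 ≤ t → Integrable (fun ω => exp (t * Y ω)) μ ∧
      ∫ ω, exp (t * Y ω) ∂μ ≤ exp (c * t ^ 2 / 2)) :
    μ.real {ω | ε ≤ Y ω} ≤ exp (-ε ^ 2 / (2 * c)) := by
  rcases hc.eq_or_lt with rfl | hc
  · simp [measureReal_le_one]
  obtain ⟨hint, hle⟩ := h (ε / c) (by positivity)
  calc μ.real {ω | ε ≤ Y ω} ≤ exp (-(ε / c) * ε) * mgf Y μ (ε / c) :=
        measure_ge_le_exp_mul_mgf ε (by positivity) hint
    _ ≤ exp (-(ε / c) * ε) * exp (c * (ε / c) ^ 2 / 2) := by gcongr; exact hle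
    _ = exp (-ε ^ 2 / (2 * c)) := by
        rw [← exp_add]; congr 1; field_simp; ring

theorem stmt9_general
    {Ω : Type*} {mΩ : MeasurableSpace Ω} {μ : Measure Ω} [IsProbabilityMeasure μ]
    (𝒢 : Filtration ℕ mΩ) (X : ℕ → Ω → ℝ)
    (hadapt : StronglyAdapted 𝒢 X)
    (hint : ∀ n, Integrable (X n) μ)
    (hsuper : ∀ n, 1 ≤ n → ∀ᵐ ω ∂μ, (μ[X (n + 1) | 𝒢 n]) ω ≤ X n ω)
    (a b : ℕ → ℝ) (hab : ∀ n, a n < b n)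
    (hinc : ∀ n, 1 ≤ n → ∀ᵐ ω ∂μ, X (n + 1) ω - X n ω ∈ Set.Icc (a (n + 1)) (b (n + 1))) :
    ∀ n, 1 ≤ n → ∀ lam : ℝ, 0 < lam →
      (μ {ω | lam ≤ X n ω - X 1 ω}).toReal ≤
        Real.exp (-(2 * lam ^ 2) / ∑ k ∈ Finset.Icc 2 n, (b k - a k) ^ 2) := by
  intro n hn lam hlam
  have h := measureReal_ge_le_of_integral_exp_le (μ := μ) (Y := fun ω => X n ω - X 1 ω)
    (Finset.sum_nonneg fun k _ => sq_nonneg ((b k - a k) / 2)) hlam.le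
    fun t ht => integral_exp_mul_sub_le hadapt hint hsuper hab hinc ht n hn
  refine h.trans_eq ?_
  simp only [div_pow, ← Finset.sum_div, Nat.reduceAdd]
  congr 1
  ring

/-- Hoeffding's inequality for supermartingales: if X₁ is constant and the
increments satisfy X_{n+1} − X_n ∈ [a_{n+1}, b_{n+1}] a.s., then
P(X_n − X₁ ≥ λ) ≤ exp(−2λ² / ∑_{k=2}^n (b_k − a_k)²). -/
theorem stmt9
    {Ω : Type*} {mΩ : MeasurableSpace Ω} {μ : Measure Ω} [IsProbabilityMeasure μ]
    (𝒢 : Filtration ℕ mΩ) (X : ℕ → Ω → ℝ)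
    (hadapt : StronglyAdapted 𝒢 X)
    (hint : ∀ n, Integrable (X n) μ)
    (hsuper : ∀ n, 1 ≤ n → ∀ᵐ ω ∂μ, (μ[X (n + 1) | 𝒢 n]) ω ≤ X n ω)
    (a b : ℕ → ℝ) (hab : ∀ n, a n < b n)
    (hconst : ∃ c₀ : ℝ, ∀ ω, X 1 ω = c₀)
    (hinc : ∀ n, 1 ≤ n → ∀ᵐ ω ∂μ, X (n + 1) ω - X n ω ∈ Set.Icc (a (n + 1)) (b (n + 1))) :
    ∀ n, 1 ≤ n → ∀ lam : ℝ, 0 < lam →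
      (μ {ω | lam ≤ X n ω - X 1 ω}).toReal ≤
        Real.exp (-(2 * lam ^ 2) / ∑ k ∈ Finset.Icc 2 n, (b k - a k) ^ 2) :=
  stmt9_general 𝒢 X hadapt hint hsuper a b hab hinc
end

section
/- Let {X_n} be a ranking supermartingale wrt {F_n} with parameters ε > 0, K < 0, and let T := min{n | X_n < 0}. Define Y_n := X_n + ε·(min{T, n} − 1). Suppose additionally that X_{n+1} = X_n a.s. on the event {T ≤ n}, and X_{n+1} − X_n ∈ [a, b] a.s. Then {Y_n} is a supermartingale and Y_{n+1} − Y_n ∈ [a + ε, b + ε] almost surely (indeed Y_{n+1} − Y_n = 1_{T>n}·(X_{n+1} − X_n + ε)). -/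
open MeasureTheory
open scoped ENNReal

lemma aux_min (t : ℕ∞) (n : ℕ) :
    (((min t ((n : ℕ) + 1 : ℕ)).toNat : ℝ))
      = ((min t (n : ℕ∞)).toNat : ℝ) + (if (n : ℕ∞) < t then 1 else 0) := by
  by_cases h : (n : ℕ∞) < t
  · have h1 : ((n : ℕ∞) + 1) ≤ t := Order.add_one_le_of_lt h
    have h1' : (((n + 1 : ℕ) : ℕ∞)) ≤ t := by push_cast; exact h1
    rw [min_eq_right h1', min_eq_right h.le, if_pos h, ENat.toNat_coe, ENat.toNat_coe]
    push_cast; ring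
  · push_neg at h
    rw [min_eq_left (h.trans (by exact_mod_cast Nat.cast_le.mpr (Nat.le_succ n))),
      min_eq_left h, if_neg (not_lt.mpr h)]
    simp

lemma aux_meas {Ω : Type*} {mΩ : MeasurableSpace Ω} (𝒢 : Filtration ℕ mΩ) (T : Ω → ℕ∞)
    (hTmeas : ∀ k : ℕ, MeasurableSet[𝒢 k] {ω | (k : ℕ∞) < T ω}) (n : ℕ) :
    ∀ m, m ≤ n + 1 → StronglyMeasurable[𝒢 n]
      (fun ω => (((min (T ω) (m : ℕ∞)).toNat : ℝ))) := by
  intro m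
  induction m with
  | zero =>
    intro _
    have h0 : (fun ω => (((min (T ω) ((0:ℕ) : ℕ∞)).toNat : ℝ))) = fun _ => (0:ℝ) := by
      funext ω; simp
    rw [h0]; exact stronglyMeasurable_const
  | succ m ih =>
    intro hm
    have hprev := ih (Nat.le_of_succ_le hm)
    have hset : MeasurableSet[𝒢 n] {ω | (m : ℕ∞) < T ω} :=
      𝒢.mono (Nat.lt_succ_iff.mp hm) _ (hTmeas m)
    have : (fun ω => (((min (T ω) ((m + 1 : ℕ) : ℕ∞)).toNat : ℝ)))
        = (fun ω => ((min (T ω) (m : ℕ∞)).toNat : ℝ))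
          + Set.indicator {ω | (m : ℕ∞) < T ω} (fun _ => (1 : ℝ)) := by
      funext ω
      have := aux_min (T ω) m
      simp only [Pi.add_apply, Set.indicator_apply, Set.mem_setOf_eq]
      push_cast at this ⊢
      rw [this]
    rw [this]
    exact hprev.add (stronglyMeasurable_const.indicator hset)

lemma aux_bound (t : ℕ∞) (m : ℕ) : |(((min t (m : ℕ∞)).toNat : ℝ)) - 1| ≤ m + 1 := by
  have h1 : (min t (m : ℕ∞)).toNat ≤ m := by
    have : min t (m : ℕ∞) ≤ (m : ℕ∞) := min_le_right _ _
    exact ENat.toNat_le_of_le_coe this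
  rw [abs_le]
  have h2 : ((min t (m : ℕ∞)).toNat : ℝ) ≤ m := Nat.cast_le.mpr h1
  have h3 : (0 : ℝ) ≤ ((min t (m : ℕ∞)).toNat : ℝ) := Nat.cast_nonneg _
  constructor <;> nlinarith [Nat.cast_nonneg (α := ℝ) m]

/-- The stopped-compensated process Y_n := X_n + ε(min{T,n} − 1) of a ranking
supermartingale with bounded increments is a supermartingale, and
Y_{n+1} − Y_n = 1_{T>n}·(X_{n+1} − X_n + ε) ∈ [a + ε, b + ε] a.s. -/
theorem stmt12
    {Ω : Type*} {mΩ : MeasurableSpace Ω} {μ : Measure Ω} [IsProbabilityMeasure μ]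
    (𝒢 : Filtration ℕ mΩ) (X : ℕ → Ω → ℝ)
    (hadapt : Adapted 𝒢 X)
    (K ε : ℝ) (hK : K < 0) (hε : 0 < ε)
    (hint : ∀ n, Integrable (X n) μ)
    (hbd : ∀ n, 1 ≤ n → ∀ᵐ ω ∂μ, K ≤ X n ω)
    (hdec : ∀ n, 1 ≤ n → ∀ᵐ ω ∂μ,
      (μ[X (n + 1) | 𝒢 n]) ω ≤ X n ω - Set.indicator {ω' | 0 ≤ X n ω'} (fun _ => ε) ω)
    (T : Ω → ℕ∞)
    (hT : ∀ ω, T ω = sInf ((fun m : ℕ => (m : ℕ∞)) '' {m | 1 ≤ m ∧ X m ω < 0}))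
    (hTmeas : ∀ n : ℕ, MeasurableSet[𝒢 n] {ω | (n : ℕ∞) < T ω})
    (hTev : ∀ n : ℕ, 1 ≤ n → ∀ ω, ((n : ℕ∞) < T ω ↔ 0 ≤ X n ω))
    (hfreeze : ∀ n : ℕ, 1 ≤ n → ∀ᵐ ω ∂μ, T ω ≤ (n : ℕ∞) → X (n + 1) ω = X n ω)
    (a b : ℝ) (ha : a ≤ -ε) (hb : -ε ≤ b)
    (hinc : ∀ n, 1 ≤ n → ∀ᵐ ω ∂μ, X (n + 1) ω - X n ω ∈ Set.Icc a b)
    (Y : ℕ → Ω → ℝ)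
    (hY : ∀ n ω, Y n ω = X n ω + ε * (((min (T ω) (n : ℕ∞)).toNat : ℝ) - 1)) :
    (∀ n, 1 ≤ n → ∀ᵐ ω ∂μ, (μ[Y (n + 1) | 𝒢 n]) ω ≤ Y n ω) ∧
    (∀ n, 1 ≤ n → ∀ᵐ ω ∂μ,
      Y (n + 1) ω - Y n ω =
        (if (n : ℕ∞) < T ω then 1 else 0) * (X (n + 1) ω - X n ω + ε) ∧
      Y (n + 1) ω - Y n ω ∈ Set.Icc (a + ε) (b + ε)) := by
  constructor
  · intro n hn
    set g : Ω → ℝ := fun ω => ε * (((min (T ω) ((n + 1 : ℕ) : ℕ∞)).toNat : ℝ) - 1) with hg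
    have hgsm : StronglyMeasurable[𝒢 n] g :=
      ((aux_meas 𝒢 T hTmeas n (n + 1) le_rfl).sub stronglyMeasurable_const).const_mul ε
    have hgint : Integrable g μ := by
      refine Integrable.mono' (integrable_const (|ε| * ((n + 1 : ℝ) + 1)))
        ((hgsm.mono (𝒢.le n)).aestronglyMeasurable) ?_
      filter_upwards with ω
      rw [hg]
      rw [Real.norm_eq_abs, abs_mul]
      refine mul_le_mul_of_nonneg_left ?_ (abs_nonneg ε)
      have := aux_bound (T ω) (n + 1)
      push_cast at this ⊢
      exact this
    have hYeq : Y (n + 1) = X (n + 1) + g := by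
      funext ω; simp [hY, hg]
    have hce : μ[Y (n + 1) | 𝒢 n] =ᵐ[μ] μ[X (n + 1) | 𝒢 n] + g := by
      rw [hYeq]
      have h1 := condExp_add (m := 𝒢 n) (μ := μ) (hint (n + 1)) hgint
      rwa [condExp_of_stronglyMeasurable (𝒢.le n) hgsm hgint] at h1
    filter_upwards [hce, hdec n hn] with ω h1 h2
    rw [h1, Pi.add_apply, hY n ω, hg]
    simp only
    rw [Set.indicator_apply] at h2
    simp only [Set.mem_setOf_eq] at h2
    have key := aux_min (T ω) n
    by_cases h : (n : ℕ∞) < T ω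
    · rw [if_pos ((hTev n hn ω).mp h)] at h2
      rw [key, if_pos h]
      linarith
    · rw [if_neg (fun hx => h ((hTev n hn ω).mpr hx))] at h2
      rw [key, if_neg h]
      linarith
  · intro n hn
    filter_upwards [hfreeze n hn, hinc n hn] with ω hfr hi
    have hd : Y (n + 1) ω - Y n ω
        = (if (n : ℕ∞) < T ω then 1 else 0) * (X (n + 1) ω - X n ω + ε) := by
      rw [hY, hY, aux_min (T ω) n]
      by_cases h : (n : ℕ∞) < T ω
      · rw [if_pos h]; ring
      · rw [if_neg h, hfr (not_lt.mp h)]; ring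
    refine ⟨hd, ?_⟩
    rw [hd]
    by_cases h : (n : ℕ∞) < T ω
    · rw [if_pos h, one_mul]
      exact ⟨by linarith [hi.1], by linarith [hi.2]⟩
    · rw [if_neg h, zero_mul]
      exact ⟨by linarith, by linarith⟩
end

section
/- In the setting of the previous construction, with W_0 := Y_1 = X_1 a constant, ε ≥ 1, and Y_{n+1} − Y_n ∈ [a+ε, b+ε] a.s., Hoeffding's inequality yields for all n > W_0/ε + 1: P(T > n) ≤ exp(−2(ε(n−1) − W_0)² / ((n−1)(b−a)²)). In particular, P(T > n) decreases exponentially in n. -/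
open MeasureTheory
open scoped ENNReal

/-- Concentration of termination time: with W₀ = Y₁ = X₁ constant, ε ≥ 1 and
Hoeffding's inequality for the compensated supermartingale Y, we get
P(T > n) ≤ exp(−2(ε(n−1) − W₀)² / ((n−1)(b−a)²)) for all n > W₀/ε + 1. -/
theorem stmt13
    {Ω : Type*} {mΩ : MeasurableSpace Ω} {μ : Measure Ω} [IsProbabilityMeasure μ]
    (X : ℕ → Ω → ℝ) (T : Ω → ℕ∞) (Y : ℕ → Ω → ℝ)
    (ε W₀ a b : ℝ) (hε : 1 ≤ ε) (hab : a < b)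
    (hTev : ∀ n : ℕ, 1 ≤ n → ∀ ω, ((n : ℕ∞) < T ω ↔ 0 ≤ X n ω))
    (hY : ∀ n ω, Y n ω = X n ω + ε * (((min (T ω) (n : ℕ∞)).toNat : ℝ) - 1))
    (hX1 : ∀ ω, X 1 ω = W₀)
    (hY1 : ∀ ω, Y 1 ω = W₀)
    (hHoeff : ∀ n : ℕ, 1 ≤ n → ∀ lam : ℝ, 0 < lam →
      (μ {ω | lam ≤ Y n ω - Y 1 ω}).toReal ≤
        Real.exp (-(2 * lam ^ 2) / (((n : ℝ) - 1) * (b - a) ^ 2))) :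
    ∀ n : ℕ, W₀ / ε + 1 < (n : ℝ) →
      (μ {ω | (n : ℕ∞) < T ω}).toReal ≤
        Real.exp (-(2 * (ε * ((n : ℝ) - 1) - W₀) ^ 2) / (((n : ℝ) - 1) * (b - a) ^ 2)) := by
  intro n hn
  have hε0 : (0:ℝ) < ε := lt_of_lt_of_le one_pos hε
  by_cases hn0 : n = 0
  · subst hn0
    have hnum : -(2 * (ε * (((0:ℕ):ℝ) - 1) - W₀) ^ 2) ≤ 0 := by
      push_cast; nlinarith [sq_nonneg (ε * (0 - 1) - W₀)]
    have hden : (((0:ℕ):ℝ) - 1) * (b - a) ^ 2 ≤ 0 := by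
      push_cast; nlinarith [sq_nonneg (b - a)]
    have hexp : (0:ℝ) ≤ -(2 * (ε * (((0:ℕ):ℝ) - 1) - W₀) ^ 2) / ((((0:ℕ):ℝ) - 1) * (b - a) ^ 2) :=
      div_nonneg_iff.mpr (Or.inr ⟨hnum, hden⟩)
    calc (μ {ω | ((0:ℕ):ℕ∞) < T ω}).toReal ≤ (μ Set.univ).toReal := by
          apply ENNReal.toReal_mono (by simp) (measure_mono (Set.subset_univ _))
      _ = 1 := by simp
      _ ≤ _ := by
          exact Real.one_le_exp hexp
  · have hn1 : 1 ≤ n := Nat.one_le_iff_ne_zero.mpr hn0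
    set lam := ε * ((n:ℝ) - 1) - W₀ with hlam
    have hlampos : 0 < lam := by
      have : W₀ / ε < (n:ℝ) - 1 := by linarith
      have := (div_lt_iff₀ hε0).mp this
      simp only [hlam]; nlinarith
    have hsub : {ω | (n:ℕ∞) < T ω} ⊆ {ω | lam ≤ Y n ω - Y 1 ω} := by
      intro ω hω
      simp only [Set.mem_setOf_eq] at hω ⊢
      have hXn : 0 ≤ X n ω := (hTev n hn1 ω).mp hω
      have hmin : min (T ω) (n:ℕ∞) = (n:ℕ∞) := min_eq_right (le_of_lt hω)
      have hYn : Y n ω = X n ω + ε * ((n:ℝ) - 1) := by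
        rw [hY, hmin]; simp
      rw [hYn, hY1]
      simp only [hlam]
      nlinarith
    calc (μ {ω | (n:ℕ∞) < T ω}).toReal ≤ (μ {ω | lam ≤ Y n ω - Y 1 ω}).toReal := by
          apply ENNReal.toReal_mono (measure_ne_top _ _) (measure_mono hsub)
      _ ≤ _ := hHoeff n hn1 lam hlampos
end
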